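/- The smallest eigenvalue satisfies limsup_{n→∞} λ_min(Ŝ^{(n)}) ≤ 0.64; consequently, liminf_{n→∞} ‖I − Ŝ^{(n)}‖₂ ≥ 0.36. -/

import Mathlib

/-
Detailed balance `p i P(i,j) = p j P(j,i)` makes `diag(√p) Ŝ diag(√p)⁻¹` symmetric, so the
spectrum of `Ŝ` is real and its smallest element is at most the mean eigenvalue `tr Ŝ / (n-2)`.
With `upProb a = p(a+1) / (p a + p(a+1)) ∈ [0,1]` the diagonal entries are
`P(a+1,a+1) = 1/2 + (upProb a - upProb (a+1))/2`, so the trace telescopes to at most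
`(n-2)/2 + 1/2`, whence `λ_min ≤ 1/2 + 1/(2(n-2)) ≤ 0.64` for `n ≥ 6`; and `1 - λ_min ≥ 0.36`
lies in the spectrum of `I - Ŝ`, bounding its norm. The `limsup`/`liminf` in `ℝ` are junk unless
the sequences are bounded; they are, since `Ŝ` and `I - Ŝ` are tridiagonal with entries in
`[-1,1]`, so by the Schur test their spectral norms are at most `3`.
-/

open Finset Filter
open scoped Real

noncomputable section

namespace RareChain

/-- The potential `w(i) = ((n-1)/(4π)) cos(4π(i-1)/(n-1))`. -/
def w (n i : ℕ) : ℝ :=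
  ((n : ℝ) - 1) / (4 * Real.pi) * Real.cos (4 * Real.pi * ((i : ℝ) - 1) / ((n : ℝ) - 1))

/-- The normalizing constant `Z = ∑_{j=1}^n e^{w(j)}`. -/
def Z (n : ℕ) : ℝ := ∑ j ∈ Finset.Icc 1 n, Real.exp (w n j)

/-- The invariant probability vector `p(i) = e^{w(i)} / Z`. -/
def p (n i : ℕ) : ℝ := Real.exp (w n i) / Z n

/-- The nearest-neighbor transition matrix of Section 3 of the paper (indices in `{1,…,n}`,
entries outside read as `0`). -/
def Pmat (n : ℕ) (i j : ℕ) : ℝ :=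
  if i < 1 ∨ n < i ∨ j < 1 ∨ n < j then 0
  else if j = i + 1 then p n (i + 1) / (2 * (p n i + p n (i + 1)))
  else if j + 1 = i then p n (i - 1) / (2 * (p n i + p n (i - 1)))
  else if j = i then
    1 - (if i + 1 ≤ n then p n (i + 1) / (2 * (p n i + p n (i + 1))) else 0)
      - (if 2 ≤ i then p n (i - 1) / (2 * (p n i + p n (i - 1))) else 0)
  else 0

/-- The interior submatrix `Ŝ^{(n)}(i,j) = P(i+1, j+1)`, `1 ≤ i,j ≤ n-2`. -/
def Shat (n : ℕ) : Matrix (Fin (n - 2)) (Fin (n - 2)) ℝ :=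
  fun i j => Pmat n ((i : ℕ) + 2) ((j : ℕ) + 2)

end RareChain

namespace Matrix

variable {ι : Type*} [Fintype ι] [DecidableEq ι]

theorem norm_toEuclideanCLM_le_of_sum_abs_le (A : Matrix ι ι ℝ) {c : ℝ} (hc : 0 ≤ c)
    (hrow : ∀ i, ∑ j, |A i j| ≤ c) (hcol : ∀ j, ∑ i, |A i j| ≤ c) :
    ‖toEuclideanCLM (𝕜 := ℝ) A‖ ≤ c := by
  refine ContinuousLinearMap.opNorm_le_bound _ hc fun x => ?_
  have hcs : ∀ i, (∑ j, A i j * x j) ^ 2 ≤ c * ∑ j, |A i j| * x j ^ 2 := fun i =>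
    calc (∑ j, A i j * x j) ^ 2 ≤ (∑ j, |A i j|) * ∑ j, |A i j| * x j ^ 2 :=
          sum_sq_le_sum_mul_sum_of_sq_le_mul _ (fun _ _ => abs_nonneg _)
            (fun _ _ => by positivity) fun j _ => by rw [mul_pow, ← mul_assoc, ← sq, sq_abs]
      _ ≤ c * ∑ j, |A i j| * x j ^ 2 := by gcongr; exacts [hrow i]
  have hsq : ‖toEuclideanCLM (𝕜 := ℝ) A x‖ ^ 2 ≤ (c * ‖x‖) ^ 2 :=
    calc ‖toEuclideanCLM (𝕜 := ℝ) A x‖ ^ 2 = ∑ i, (∑ j, A i j * x j) ^ 2 := by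
          simp [EuclideanSpace.real_norm_sq_eq, mulVec, dotProduct]
      _ ≤ ∑ i, c * ∑ j, |A i j| * x j ^ 2 := sum_le_sum fun i _ => hcs i
      _ = c * ∑ j, (∑ i, |A i j|) * x j ^ 2 := by
          rw [← mul_sum, sum_comm]; simp_rw [sum_mul]
      _ ≤ c * ∑ j, c * x j ^ 2 := by gcongr with j; exact hcol j
      _ = (c * ‖x‖) ^ 2 := by rw [← mul_sum, mul_pow, EuclideanSpace.real_norm_sq_eq]; ring
  exact le_of_sq_le_sq hsq (by positivity)

theorem abs_le_norm_toEuclideanCLM_of_mem_spectrum {A : Matrix ι ι ℝ} {μ : ℝ}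
    (hμ : μ ∈ spectrum ℝ A) : |μ| ≤ ‖toEuclideanCLM (𝕜 := ℝ) A‖ := by
  rw [← AlgEquiv.spectrum_eq (toEuclideanCLM (𝕜 := ℝ))] at hμ
  calc |μ| ≤ ‖toEuclideanCLM (𝕜 := ℝ) A‖ * ‖(1 : EuclideanSpace ℝ ι →L[ℝ] EuclideanSpace ℝ ι)‖ :=
        spectrum.norm_le_norm_mul_of_mem hμ
    _ ≤ ‖toEuclideanCLM (𝕜 := ℝ) A‖ :=
        mul_le_of_le_one_right (norm_nonneg _) ContinuousLinearMap.norm_id_le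

def diagonalUnit {K : Type*} [Field K] (v : ι → K) (hv : ∀ i, v i ≠ 0) : (Matrix ι ι K)ˣ where
  val := diagonal v
  inv := diagonal fun i => (v i)⁻¹
  val_inv := by rw [diagonal_mul_diagonal, ← diagonal_one]; simp [hv]
  inv_val := by rw [diagonal_mul_diagonal, ← diagonal_one]; simp [hv]

theorem diagonalUnit_conj_apply {K : Type*} [Field K] (v : ι → K) (hv : ∀ i, v i ≠ 0)
    (A : Matrix ι ι K) (i j : ι) :
    ((diagonalUnit v hv : Matrix ι ι K) * A * (↑(diagonalUnit v hv)⁻¹ : Matrix ι ι K)) i j =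
      v i * A i j / v j := by
  simp [diagonalUnit, diagonal_mul, mul_diagonal, div_eq_mul_inv]

noncomputable def sqrtDiagonalUnit (q : ι → ℝ) (hq : ∀ i, 0 < q i) : (Matrix ι ι ℝ)ˣ :=
  diagonalUnit (fun i => √(q i)) fun i => (Real.sqrt_pos.2 (hq i)).ne'

theorem isHermitian_sqrtDiagonalUnit_conj {q : ι → ℝ} (hq : ∀ i, 0 < q i) {A : Matrix ι ι ℝ}
    (hA : ∀ i j, q i * A i j = q j * A j i) :
    ((sqrtDiagonalUnit q hq : Matrix ι ι ℝ) * A *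
      (↑(sqrtDiagonalUnit q hq)⁻¹ : Matrix ι ι ℝ)).IsHermitian := by
  refine IsHermitian.ext fun i j => ?_
  have hi := Real.sqrt_pos.2 (hq i)
  have hj := Real.sqrt_pos.2 (hq j)
  simp only [sqrtDiagonalUnit, diagonalUnit_conj_apply, star_trivial]
  field_simp
  linear_combination Real.sq_sqrt (hq j).le * A j i - Real.sq_sqrt (hq i).le * A i j + hA j i

theorem exists_mem_spectrum_le_trace_div_card [Nonempty ι] {q : ι → ℝ} (hq : ∀ i, 0 < q i)
    {A : Matrix ι ι ℝ} (hA : ∀ i j, q i * A i j = q j * A j i) :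
    ∃ μ ∈ spectrum ℝ A, μ ≤ A.trace / Fintype.card ι := by
  have hS := isHermitian_sqrtDiagonalUnit_conj hq hA
  have hsum : ∑ i, hS.eigenvalues i ≤ ∑ _i : ι, A.trace / Fintype.card ι := by
    have htr := hS.trace_eq_sum_eigenvalues
    rw [trace_units_conj] at htr
    rw [sum_const, card_univ, nsmul_eq_mul, mul_div_cancel₀ _ (by positivity), htr]
    simp
  obtain ⟨i, -, hi⟩ := exists_le_of_sum_le univ_nonempty hsum
  exact ⟨_, spectrum.units_conjugate (R := ℝ) (A := Matrix ι ι ℝ) ▸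
    hS.eigenvalues_mem_spectrum_real i, hi⟩

theorem sum_abs_le_of_tridiagonal {d : ℕ} (A : Matrix (Fin d) (Fin d) ℝ) {a : ℝ}
    (ha : ∀ i j, |A i j| ≤ a)
    (hA : ∀ i j : Fin d, (i : ℕ) + 1 < j ∨ (j : ℕ) + 1 < i → A i j = 0) (i : Fin d) :
    ∑ j, |A i j| ≤ 3 * a := by
  set near := univ.filter fun j : Fin d => (j : ℕ) ∈ Icc ((i : ℕ) - 1) (i + 1)
  have hnear : #near ≤ 3 := by
    refine (card_le_card_of_injOn (t := Icc ((i : ℕ) - 1) (i + 1)) (fun j : Fin d => (j : ℕ))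
      (fun j hj => ?_) Fin.val_injective.injOn).trans ?_
    · simpa [near] using hj
    · simp only [Nat.card_Icc]; omega
  have ha0 : 0 ≤ a := (abs_nonneg _).trans (ha i i)
  calc ∑ j, |A i j| = ∑ j ∈ near, |A i j| := by
        refine (sum_subset (subset_univ _) fun j _ hj => ?_).symm
        simp only [near, mem_filter, mem_univ, true_and, mem_Icc, not_and_or, not_le] at hj
        rw [hA i j (by omega), abs_zero]
    _ ≤ #near * a := by simpa using sum_le_card_nsmul near _ a fun j _ => ha i j
    _ ≤ 3 * a := by gcongr; exact_mod_cast hnear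

theorem norm_toEuclideanCLM_le_of_tridiagonal {d : ℕ} (A : Matrix (Fin d) (Fin d) ℝ) {a : ℝ}
    (ha0 : 0 ≤ a) (ha : ∀ i j, |A i j| ≤ a)
    (hA : ∀ i j : Fin d, (i : ℕ) + 1 < j ∨ (j : ℕ) + 1 < i → A i j = 0) :
    ‖toEuclideanCLM (𝕜 := ℝ) A‖ ≤ 3 * a :=
  norm_toEuclideanCLM_le_of_sum_abs_le A (by positivity) (sum_abs_le_of_tridiagonal A ha hA)
    (sum_abs_le_of_tridiagonal Aᵀ (fun i j => ha j i) fun i j h => hA j i h.symm)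

end Matrix

namespace RareChain

open Matrix

theorem p_pos {n : ℕ} (hn : 1 ≤ n) (i : ℕ) : 0 < p n i :=
  div_pos (Real.exp_pos _) <| sum_pos (fun _ _ => Real.exp_pos _) ⟨1, by simp; omega⟩

theorem Pmat_mem_Icc {n : ℕ} (hn : 1 ≤ n) (i j : ℕ) : Pmat n i j ∈ Set.Icc 0 1 := by
  have hrate : ∀ k, p n k / (2 * (p n i + p n k)) ∈ Set.Icc 0 (1 / 2) := fun k => by
    have hi := p_pos hn i
    have hk := p_pos hn k
    exact ⟨by positivity, by rw [div_le_iff₀ (by positivity)]; linarith⟩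
  have hup := hrate (i + 1)
  have hdown := hrate (i - 1)
  unfold Pmat
  split_ifs <;> constructor <;> linarith [hup.1, hup.2, hdown.1, hdown.2]

theorem Pmat_eq_zero_of_far (n : ℕ) {i j : ℕ} (h : i + 1 < j ∨ j + 1 < i) : Pmat n i j = 0 := by
  unfold Pmat; split_ifs <;> first | rfl | omega

theorem p_mul_Pmat_succ (n i : ℕ) : p n i * Pmat n i (i + 1) = p n (i + 1) * Pmat n (i + 1) i := by
  unfold Pmat
  simp only [Nat.add_sub_cancel]
  split_ifs <;> first | omega | ring

theorem p_mul_Pmat_comm (n i j : ℕ) : p n i * Pmat n i j = p n j * Pmat n j i := by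
  rcases lt_trichotomy (i + 1) j with h | rfl | h
  · rw [Pmat_eq_zero_of_far n (.inl h), Pmat_eq_zero_of_far n (.inr h), mul_zero, mul_zero]
  · exact p_mul_Pmat_succ n i
  rcases lt_trichotomy (j + 1) i with h' | rfl | h'
  · rw [Pmat_eq_zero_of_far n (.inr h'), Pmat_eq_zero_of_far n (.inl h'), mul_zero, mul_zero]
  · exact (p_mul_Pmat_succ n j).symm
  · obtain rfl : i = j := by omega
    rfl

def upProb (n a : ℕ) : ℝ := p n (a + 1) / (p n a + p n (a + 1))

theorem upProb_mem_Icc {n : ℕ} (hn : 1 ≤ n) (a : ℕ) : upProb n a ∈ Set.Icc 0 1 := by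
  have h0 := p_pos hn a
  have h1 := p_pos hn (a + 1)
  exact ⟨by unfold upProb; positivity, (div_le_one (by positivity)).2 (by linarith)⟩

theorem Pmat_succ_succ {n a : ℕ} (ha : 1 ≤ a) (han : a + 2 ≤ n) :
    Pmat n (a + 1) (a + 1) = 1 / 2 + (upProb n a - upProb n (a + 1)) / 2 := by
  have h0 := p_pos (n := n) (by omega) a
  have h1 := p_pos (n := n) (by omega) (a + 1)
  have h2 := p_pos (n := n) (by omega) (a + 2)
  unfold Pmat upProb
  rw [if_neg (by omega), if_neg (by omega), if_neg (by omega), if_pos rfl, if_pos (by omega),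
    if_pos (by omega), Nat.add_sub_cancel]
  field_simp
  ring

theorem trace_Shat_le {n : ℕ} (hn : 3 ≤ n) :
    (Shat n).trace ≤ ((n - 2 : ℕ) : ℝ) / 2 + 1 / 2 := by
  have hdiag : ∀ k < n - 2,
      Pmat n (k + 2) (k + 2) = 1 / 2 + (upProb n (k + 1) - upProb n (k + 1 + 1)) / 2 :=
    fun k hk => Pmat_succ_succ (by omega) (by omega)
  have htel :
      (Shat n).trace = ((n - 2 : ℕ) : ℝ) / 2 + (upProb n 1 - upProb n (n - 2 + 1)) / 2 := by
    calc (Shat n).trace = ∑ k ∈ range (n - 2), Pmat n (k + 2) (k + 2) :=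
          Fin.sum_univ_eq_sum_range (fun k => Pmat n (k + 2) (k + 2)) _
      _ = ∑ k ∈ range (n - 2), (1 / 2 + (upProb n (k + 1) - upProb n (k + 1 + 1)) / 2) :=
          sum_congr rfl fun k hk => hdiag k (mem_range.1 hk)
      _ = _ := by
          rw [sum_add_distrib, sum_const, card_range, nsmul_eq_mul, ← sum_div,
            sum_range_sub' (fun k => upProb n (k + 1))]
          ring
  have h1 := upProb_mem_Icc (n := n) (by omega) 1
  have h2 := upProb_mem_Icc (n := n) (by omega) (n - 2 + 1)
  rw [htel]
  linarith [h1.1, h1.2, h2.1, h2.2]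

theorem Shat_eq_zero_of_far (n : ℕ) {i j : Fin (n - 2)}
    (h : (i : ℕ) + 1 < j ∨ (j : ℕ) + 1 < i) : Shat n i j = 0 :=
  Pmat_eq_zero_of_far n (by omega)

theorem Shat_mem_Icc {n : ℕ} (hn : 1 ≤ n) (i j : Fin (n - 2)) : Shat n i j ∈ Set.Icc 0 1 :=
  Pmat_mem_Icc hn _ _

theorem norm_Shat_le {n : ℕ} (hn : 1 ≤ n) : ‖toEuclideanCLM (𝕜 := ℝ) (Shat n)‖ ≤ 3 := by
  refine (norm_toEuclideanCLM_le_of_tridiagonal (Shat n) zero_le_one (fun i j => ?_)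
    fun i j => Shat_eq_zero_of_far n).trans_eq (mul_one 3)
  have := Shat_mem_Icc hn i j
  exact abs_le.2 ⟨by linarith [this.1], this.2⟩

theorem norm_one_sub_Shat_le {n : ℕ} (hn : 1 ≤ n) :
    ‖toEuclideanCLM (𝕜 := ℝ) ((1 : Matrix (Fin (n - 2)) (Fin (n - 2)) ℝ) - Shat n)‖ ≤ 3 := by
  refine (norm_toEuclideanCLM_le_of_tridiagonal _ zero_le_one (fun i j => ?_)
    fun i j h => ?_).trans_eq (mul_one 3)
  · have := Shat_mem_Icc hn i j
    rw [Matrix.sub_apply, one_apply, abs_le]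
    split_ifs <;> constructor <;> linarith [this.1, this.2]
  · rw [Matrix.sub_apply, one_apply_ne (by omega), Shat_eq_zero_of_far n h, sub_zero]

theorem exists_mem_spectrum_Shat_le {n : ℕ} (hn : 6 ≤ n) :
    ∃ μ ∈ spectrum ℝ (Shat n), μ ≤ 0.64 := by
  have : Nonempty (Fin (n - 2)) := ⟨⟨0, by omega⟩⟩
  obtain ⟨μ, hμ, hle⟩ := exists_mem_spectrum_le_trace_div_card
    (A := Shat n) (q := fun i : Fin (n - 2) => p n (i + 2)) (fun i => p_pos (by omega) _)
    (fun i j => p_mul_Pmat_comm n _ _)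
  refine ⟨μ, hμ, hle.trans ?_⟩
  have hd : (4 : ℝ) ≤ ((n - 2 : ℕ) : ℝ) := by exact_mod_cast (by omega : 4 ≤ n - 2)
  rw [Fintype.card_fin, div_le_iff₀ (by positivity)]
  linarith [trace_Shat_le (by omega : 3 ≤ n)]

theorem sInf_spectrum_Shat_mem_Icc {n : ℕ} (hn : 6 ≤ n) :
    sInf (spectrum ℝ (Shat n)) ∈ Set.Icc (-3) 0.64 := by
  obtain ⟨μ, hμ, hle⟩ := exists_mem_spectrum_Shat_le hn
  have hbdd : ∀ ν ∈ spectrum ℝ (Shat n), -3 ≤ ν := fun ν hν =>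
    neg_le_of_abs_le <| (abs_le_norm_toEuclideanCLM_of_mem_spectrum hν).trans
      (norm_Shat_le (by omega))
  exact ⟨le_csInf ⟨μ, hμ⟩ hbdd, (csInf_le ⟨-3, hbdd⟩ hμ).trans hle⟩

theorem le_norm_one_sub_Shat {n : ℕ} (hn : 6 ≤ n) :
    0.36 ≤ ‖toEuclideanCLM (𝕜 := ℝ) ((1 : Matrix (Fin (n - 2)) (Fin (n - 2)) ℝ) - Shat n)‖ := by
  obtain ⟨μ, hμ, hle⟩ := exists_mem_spectrum_Shat_le hn
  have h1 : 1 - μ ∈ spectrum ℝ ((1 : Matrix (Fin (n - 2)) (Fin (n - 2)) ℝ) - Shat n) := by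
    rw [← map_one (algebraMap ℝ (Matrix (Fin (n - 2)) (Fin (n - 2)) ℝ)),
      ← spectrum.singleton_sub_eq]
    exact Set.sub_mem_sub rfl hμ
  calc (0.36 : ℝ) ≤ |1 - μ| := by rw [abs_of_nonneg (by linarith)]; linarith
    _ ≤ _ := abs_le_norm_toEuclideanCLM_of_mem_spectrum h1

/-- Appendix B of the paper: the smallest eigenvalue of the interior
submatrix satisfies `limsup_n λ_min(Ŝ^{(n)}) ≤ 0.64`, hence
`liminf_n ‖I - Ŝ^{(n)}‖₂ ≥ 0.36` for the spectral norm. -/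
theorem stmt19 :
    limsup (fun n : ℕ => sInf (spectrum ℝ (Shat n))) atTop ≤ (0.64 : ℝ) ∧
    (0.36 : ℝ) ≤ liminf (fun n : ℕ =>
      ‖Matrix.toEuclideanCLM (𝕜 := ℝ)
        ((1 : Matrix (Fin (n - 2)) (Fin (n - 2)) ℝ) - Shat n)‖) atTop := by
  constructor
  · refine limsup_le_of_le (isCoboundedUnder_le_of_eventually_le atTop (x := -3) ?_) ?_ <;>
      filter_upwards [eventually_ge_atTop 6] with n hn
    exacts [(sInf_spectrum_Shat_mem_Icc hn).1, (sInf_spectrum_Shat_mem_Icc hn).2]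
  · refine le_liminf_of_le (isCoboundedUnder_ge_of_eventually_le atTop (x := 3) ?_) ?_ <;>
      filter_upwards [eventually_ge_atTop 6] with n hn
    exacts [norm_one_sub_Shat_le (by omega), le_norm_one_sub_Shat hn]

end RareChain
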